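/- arXiv:2005.12797 — 2 statements merged into one kernel-verified Lean document; each statement's English description precedes it below -/
import Mathlib

section
/- Approximation quality of the lower-level cutting-plane algorithm: Suppose the lower-level cutting-plane algorithm with tolerance δ ≥ 0 terminates at iteration T with relaxed optimal solution (a_T, v_T, x_T) and revised solution (â, v̂, x̂) = (a_T, v'_T, x_T) where v'_T - v_T ≤ δ and v'_T = (1/(1-β)) Σ_{s∈J_T} p_s(-(r^{(s)})^T Z x_T - a_T) with J_T = {s : -(r^{(s)})^T Z x_T - a_T > 0}. Define f_δ(z) := (1/(2γ)) x_T^T x_T + a_T + v_T and f̂_δ(z) := (1/(2γ)) x̂^T x̂ + â + v̂. Then f(z) - δ ≤ f_δ(z) ≤ f(z) ≤ f̂_δ(z) ≤ f(z) + δ. -/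
open Matrix

/-!
The relaxed problem only imposes the cuts indexed by `K`, so its optimal value `f_δ(z)` is a lower
bound for every value of the full problem, whence `f_δ(z) ≤ f(z)`. Conversely, among all cuts the
one indexed by `J_T = {s : -(r⁽ˢ⁾)ᵀ Z x_T - a_T > 0}` has the largest right-hand side, so raising
`v_T` to its value `v'_T` makes `(a_T, v'_T, x_T)` feasible for the full problem, whence
`f(z) ≤ f̂_δ(z)`. The two bounds differ by `v'_T - v_T ≤ δ`.
-/

theorem Finset.sum_mul_le_sum_filter_pos {ι R : Type*} [Fintype ι] [Ring R] [LinearOrder R]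
    [IsOrderedRing R] {p c : ι → R} (hp : ∀ i, 0 ≤ p i) (J : Finset ι) :
    ∑ i ∈ J, p i * c i ≤ ∑ i ∈ univ.filter (fun i => 0 < c i), p i * c i := by
  rw [sum_filter]
  calc ∑ i ∈ J, p i * c i ≤ ∑ i ∈ J, if 0 < c i then p i * c i else 0 :=
        sum_le_sum fun i _ => by
          split_ifs with hc
          · exact le_rfl
          · exact mul_nonpos_of_nonneg_of_nonpos (hp i) (not_lt.mp hc)
    _ ≤ ∑ i, if 0 < c i then p i * c i else 0 :=
        sum_le_sum_of_subset_of_nonneg J.subset_univ fun i _ _ => by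
          split_ifs with hc
          · exact mul_nonneg (hp i) hc.le
          · exact le_rfl

theorem stmt11_general (N M S : ℕ) (γ β δ : ℝ) (hβ : β ∈ Set.Ioo (0:ℝ) 1)
    (p : Fin S → ℝ) (hp : ∀ s, 0 ≤ p s)
    (r : Fin S → Fin N → ℝ) (A : Matrix (Fin M) (Fin N) ℝ) (b : Fin M → ℝ)
    (z : Fin N → ℝ)
    (K : Finset (Finset (Fin S))) (aT vT : ℝ) (xT : Fin N → ℝ) (fz : ℝ)
    -- f(z) is the optimal value of the full lower-level problem
    (hfz : IsGLB {t : ℝ | ∃ (a v : ℝ) (x : Fin N → ℝ),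
        (∀ J : Finset (Fin S),
          v ≥ (1/(1-β)) * ∑ s ∈ J, p s * (-(r s ⬝ᵥ (z * x)) - a)) ∧
        v ≥ 0 ∧
        A *ᵥ (z * x) ≤ b ∧ (∑ n, (z * x) n) = 1 ∧ (∀ n, 0 ≤ (z * x) n) ∧
        t = (1/(2*γ)) * (x ⬝ᵥ x) + a + v} fz)
    -- (aT, vT, xT) is feasible for the relaxed problem over K
    (hfeasK : (∀ J ∈ K,
          vT ≥ (1/(1-β)) * ∑ s ∈ J, p s * (-(r s ⬝ᵥ (z * xT)) - aT)) ∧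
        vT ≥ 0 ∧
        A *ᵥ (z * xT) ≤ b ∧ (∑ n, (z * xT) n) = 1 ∧ (∀ n, 0 ≤ (z * xT) n))
    -- and it is optimal for the relaxed problem over K
    (hopt : ∀ t ∈ {t : ℝ | ∃ (a v : ℝ) (x : Fin N → ℝ),
        (∀ J ∈ K, v ≥ (1/(1-β)) * ∑ s ∈ J, p s * (-(r s ⬝ᵥ (z * x)) - a)) ∧
        v ≥ 0 ∧
        A *ᵥ (z * x) ≤ b ∧ (∑ n, (z * x) n) = 1 ∧ (∀ n, 0 ≤ (z * x) n) ∧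
        t = (1/(2*γ)) * (x ⬝ᵥ x) + a + v},
      (1/(2*γ)) * (xT ⬝ᵥ xT) + aT + vT ≤ t)
    (v' : ℝ)
    (hv' : v' = (1/(1-β)) *
      ∑ s ∈ Finset.univ.filter (fun s => 0 < -(r s ⬝ᵥ (z * xT)) - aT),
        p s * (-(r s ⬝ᵥ (z * xT)) - aT))
    (hgap : v' - vT ≤ δ) :
    fz - δ ≤ (1/(2*γ)) * (xT ⬝ᵥ xT) + aT + vT ∧
    (1/(2*γ)) * (xT ⬝ᵥ xT) + aT + vT ≤ fz ∧
    fz ≤ (1/(2*γ)) * (xT ⬝ᵥ xT) + aT + v' ∧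
    (1/(2*γ)) * (xT ⬝ᵥ xT) + aT + v' ≤ fz + δ := by
  obtain ⟨-, -, hA, hsum, hnn⟩ := hfeasK
  have hscale : 0 ≤ 1 / (1 - β) := by
    have := hβ.2
    positivity
  have hv'_cuts : ∀ J : Finset (Fin S),
      v' ≥ (1/(1-β)) * ∑ s ∈ J, p s * (-(r s ⬝ᵥ (z * xT)) - aT) := fun J => by
    rw [hv']
    exact mul_le_mul_of_nonneg_left (Finset.sum_mul_le_sum_filter_pos hp J) hscale
  have hupper : fz ≤ (1/(2*γ)) * (xT ⬝ᵥ xT) + aT + v' :=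
    hfz.1 ⟨aT, v', xT, hv'_cuts, by simpa using hv'_cuts ∅, hA, hsum, hnn, rfl⟩
  have hlower : (1/(2*γ)) * (xT ⬝ᵥ xT) + aT + vT ≤ fz :=
    hfz.2 fun t ⟨a, v, x, hcuts, hrest⟩ => hopt t ⟨a, v, x, fun J _ => hcuts J, hrest⟩
  exact ⟨by linarith, hlower, hupper, by linarith⟩

/-- Approximation quality of the lower-level cutting-plane algorithm: with
`f(z)` the optimal value (greatest lower bound) of the full lower-level
problem, `(aT, vT, xT)` optimal for the relaxed problem over `K`, revised
value `v'` computed from `J_T = {s : -(r⁽ˢ⁾)ᵀZx_T - a_T > 0}`, and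
`v' - vT ≤ δ`, the sandwich
`f(z) - δ ≤ f_δ(z) ≤ f(z) ≤ f̂_δ(z) ≤ f(z) + δ` holds. -/
theorem stmt11 (N M S : ℕ) (γ β δ : ℝ) (hγ : 0 < γ) (hβ : β ∈ Set.Ioo (0:ℝ) 1)
    (hδ : 0 ≤ δ) (p : Fin S → ℝ) (hp : ∀ s, 0 ≤ p s)
    (r : Fin S → Fin N → ℝ) (A : Matrix (Fin M) (Fin N) ℝ) (b : Fin M → ℝ)
    (z : Fin N → ℝ) (hz : ∀ n, z n = 0 ∨ z n = 1)
    (K : Finset (Finset (Fin S))) (aT vT : ℝ) (xT : Fin N → ℝ) (fz : ℝ)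
    -- f(z) is the optimal value of the full lower-level problem
    (hfz : IsGLB {t : ℝ | ∃ (a v : ℝ) (x : Fin N → ℝ),
        (∀ J : Finset (Fin S),
          v ≥ (1/(1-β)) * ∑ s ∈ J, p s * (-(r s ⬝ᵥ (z * x)) - a)) ∧
        v ≥ 0 ∧
        A *ᵥ (z * x) ≤ b ∧ (∑ n, (z * x) n) = 1 ∧ (∀ n, 0 ≤ (z * x) n) ∧
        t = (1/(2*γ)) * (x ⬝ᵥ x) + a + v} fz)
    -- (aT, vT, xT) is feasible for the relaxed problem over K
    (hfeasK : (∀ J ∈ K,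
          vT ≥ (1/(1-β)) * ∑ s ∈ J, p s * (-(r s ⬝ᵥ (z * xT)) - aT)) ∧
        vT ≥ 0 ∧
        A *ᵥ (z * xT) ≤ b ∧ (∑ n, (z * xT) n) = 1 ∧ (∀ n, 0 ≤ (z * xT) n))
    -- and it is optimal for the relaxed problem over K
    (hopt : ∀ t ∈ {t : ℝ | ∃ (a v : ℝ) (x : Fin N → ℝ),
        (∀ J ∈ K, v ≥ (1/(1-β)) * ∑ s ∈ J, p s * (-(r s ⬝ᵥ (z * x)) - a)) ∧
        v ≥ 0 ∧
        A *ᵥ (z * x) ≤ b ∧ (∑ n, (z * x) n) = 1 ∧ (∀ n, 0 ≤ (z * x) n) ∧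
        t = (1/(2*γ)) * (x ⬝ᵥ x) + a + v},
      (1/(2*γ)) * (xT ⬝ᵥ xT) + aT + vT ≤ t)
    (v' : ℝ)
    (hv' : v' = (1/(1-β)) *
      ∑ s ∈ Finset.univ.filter (fun s => 0 < -(r s ⬝ᵥ (z * xT)) - aT),
        p s * (-(r s ⬝ᵥ (z * xT)) - aT))
    (hgap : v' - vT ≤ δ) :
    fz - δ ≤ (1/(2*γ)) * (xT ⬝ᵥ xT) + aT + vT ∧
    (1/(2*γ)) * (xT ⬝ᵥ xT) + aT + vT ≤ fz ∧
    fz ≤ (1/(2*γ)) * (xT ⬝ᵥ xT) + aT + v' ∧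
    (1/(2*γ)) * (xT ⬝ᵥ xT) + aT + v' ≤ fz + δ :=
  stmt11_general N M S γ β δ hβ p hp r A b z K aT vT xT fz hfz hfeasK hopt v' hv' hgap
end

section
/- Cycling implies δ-optimality: Let f* = min_{z ∈ Z} f(z) over a finite set Z ⊆ {0,1}^N, and suppose the bilevel cutting-plane algorithm generates iterates (z_t, θ_t) where each θ_t is the minimum of θ over all previously added cut constraints θ ≥ f_δ(z_u) + g_δ(z_u)^T(z - z_u), and θ_t ≤ f* for all t (each cut underestimates f on Z). If z_T = z_u for some u < T, then f* ≤ f(z_T) ≤ f* + δ. -/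
theorem stmt12_general (N : ℕ) (δ : ℝ)
    (Z : Set (Fin N → ℝ))
    (f fδ : (Fin N → ℝ) → ℝ) (g : (Fin N → ℝ) → (Fin N → ℝ))
    (fstar : ℝ) (hfstar : IsLeast (f '' Z) fstar)
    (zs : ℕ → (Fin N → ℝ)) (θs : ℕ → ℝ)
    (hmem : ∀ t, zs t ∈ Z)
    -- each θ_t is a lower bound on the optimal value
    (hθlb : ∀ t, θs t ≤ fstar)
    -- (zs t, θs t) satisfies every previously added cut
    (hcut : ∀ u t, u < t →
      θs t ≥ fδ (zs u) + ∑ n, g (zs u) n * (zs t n - zs u n))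
    -- fδ is a δ-accurate lower estimate of f
    (hfδ : ∀ z : Fin N → ℝ, f z - δ ≤ fδ z ∧ fδ z ≤ f z)
    (u T : ℕ) (huT : u < T) (hrevisit : zs T = zs u) :
    fstar ≤ f (zs T) ∧ f (zs T) ≤ fstar + δ := by
  refine ⟨hfstar.2 ⟨zs T, hmem T, rfl⟩, ?_⟩
  -- at a revisited point the linear part of the earlier cut vanishes
  have hθ_ge : fδ (zs T) ≤ θs T := by
    simpa [hrevisit] using hcut u T huT
  linarith [(hfδ (zs T)).1, hθlb T]

/-- Cycling implies δ-optimality: if the iterates of the bilevel cutting-plane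
algorithm satisfy the cut-feasibility and lower-bound conditions and the
algorithm revisits an earlier point (`zs T = zs u` with `u < T`), then
`zs T` is δ-optimal: `f* ≤ f(zs T) ≤ f* + δ`. -/
theorem stmt12 (N : ℕ) (δ : ℝ) (hδ : 0 ≤ δ)
    (Z : Set (Fin N → ℝ)) (hZbin : ∀ z ∈ Z, ∀ n, z n = 0 ∨ z n = 1)
    (hZfin : Z.Finite)
    (f fδ : (Fin N → ℝ) → ℝ) (g : (Fin N → ℝ) → (Fin N → ℝ))
    (fstar : ℝ) (hfstar : IsLeast (f '' Z) fstar)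
    (zs : ℕ → (Fin N → ℝ)) (θs : ℕ → ℝ)
    (hmem : ∀ t, zs t ∈ Z)
    -- each θ_t is a lower bound on the optimal value
    (hθlb : ∀ t, θs t ≤ fstar)
    -- (zs t, θs t) satisfies every previously added cut
    (hcut : ∀ u t, u < t →
      θs t ≥ fδ (zs u) + ∑ n, g (zs u) n * (zs t n - zs u n))
    -- fδ is a δ-accurate lower estimate of f
    (hfδ : ∀ z : Fin N → ℝ, f z - δ ≤ fδ z ∧ fδ z ≤ f z)
    (u T : ℕ) (huT : u < T) (hrevisit : zs T = zs u) :
    fstar ≤ f (zs T) ∧ f (zs T) ≤ fstar + δ :=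
  stmt12_general N δ Z f fδ g fstar hfstar zs θs hmem hθlb hcut hfδ u T huT hrevisit
end
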